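/- arXiv:2505.12010 — 4 statements merged into one kernel-verified Lean document; each statement's English description precedes it below -/
import Mathlib

section
/- Let G be a real n×n matrix with G + λI negative semidefinite and |G_{ij}| ≤ L for all entries, and let H be a real n×m matrix with operator norm ‖H‖_op ≤ P. Let γ, η > 0 and suppose 1 + γ²n²L² − 2γλ ≥ 0. Then for every v ∈ ℝⁿ and u ∈ ℝᵐ, ‖(I + γG)v + ηHu‖₂ ≤ √(1 + γ²n²L² − 2γλ)·‖v‖₂ + ηP·‖u‖₂. -/
/-- The Euclidean norm of a vector in `ℝⁿ`. -/
noncomputable def enorm' {n : ℕ} (v : Fin n → ℝ) : ℝ :=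
  Real.sqrt (∑ i, (v i) ^ 2)

lemma enorm_nonneg' {n : ℕ} (v : Fin n → ℝ) : 0 ≤ enorm' v := Real.sqrt_nonneg _

lemma enorm_eq_norm {n : ℕ} (v : Fin n → ℝ) :
    enorm' v = ‖(WithLp.equiv 2 (Fin n → ℝ)).symm v‖ := by
  simp [enorm', EuclideanSpace.norm_eq, sq_abs]

lemma enorm'_add_le {n : ℕ} (a b : Fin n → ℝ) : enorm' (a + b) ≤ enorm' a + enorm' b := by
  rw [enorm_eq_norm, enorm_eq_norm, enorm_eq_norm]
  have : (WithLp.equiv 2 (Fin n → ℝ)).symm (a + b)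
      = (WithLp.equiv 2 (Fin n → ℝ)).symm a + (WithLp.equiv 2 (Fin n → ℝ)).symm b := rfl
  rw [this]; exact norm_add_le _ _

lemma enorm_smul' {n : ℕ} (c : ℝ) (v : Fin n → ℝ) : enorm' (c • v) = |c| * enorm' v := by
  unfold enorm'
  have : ∑ i, (c • v) i ^ 2 = c ^ 2 * ∑ i, v i ^ 2 := by
    rw [Finset.mul_sum]; exact Finset.sum_congr rfl fun i _ => by simp [mul_pow]
  rw [this, Real.sqrt_mul (sq_nonneg c), Real.sqrt_sq_eq_abs]

/-- If `G + λI` is negative semidefinite with `|G i j| ≤ L`, and `H` has operator norm at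
most `P`, then `‖(I + γG)v + ηHu‖₂ ≤ √(1 + γ²n²L² − 2γλ)‖v‖₂ + ηP‖u‖₂`. -/
theorem norm_bound_coupled {n m : ℕ}
    (G : Matrix (Fin n) (Fin n) ℝ) (H : Matrix (Fin n) (Fin m) ℝ)
    (lam L P γ η : ℝ) (hγ : 0 < γ) (hη : 0 < η) (hP : 0 ≤ P)
    (hnsd : ∀ v : Fin n → ℝ,
      dotProduct v ((G + lam • (1 : Matrix (Fin n) (Fin n) ℝ)).mulVec v) ≤ 0)
    (hG : ∀ i j, |G i j| ≤ L)
    (hH : ∀ u : Fin m → ℝ, enorm' (H.mulVec u) ≤ P * enorm' u)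
    (hnn : 0 ≤ 1 + γ ^ 2 * (n : ℝ) ^ 2 * L ^ 2 - 2 * γ * lam) :
    ∀ (v : Fin n → ℝ) (u : Fin m → ℝ),
      enorm' (((1 : Matrix (Fin n) (Fin n) ℝ) + γ • G).mulVec v + η • H.mulVec u)
        ≤ Real.sqrt (1 + γ ^ 2 * (n : ℝ) ^ 2 * L ^ 2 - 2 * γ * lam) * enorm' v
          + η * P * enorm' u := by
  intro v u
  set c : ℝ := 1 + γ ^ 2 * (n : ℝ) ^ 2 * L ^ 2 - 2 * γ * lam with hc
  set w : Fin n → ℝ := G.mulVec v with hw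
  set S : ℝ := ∑ i, v i ^ 2 with hS
  have hS0 : 0 ≤ S := Finset.sum_nonneg fun i _ => sq_nonneg _
  -- rewrite the matrix-vector product
  have hmv : ((1 : Matrix (Fin n) (Fin n) ℝ) + γ • G).mulVec v = v + γ • w := by
    rw [Matrix.add_mulVec, Matrix.one_mulVec, Matrix.smul_mulVec]
  -- negative semidefinite bound
  have h1 : ∑ i, v i * w i ≤ -lam * S := by
    have := hnsd v
    rw [Matrix.add_mulVec, Matrix.smul_mulVec, Matrix.one_mulVec,
      dotProduct_add, dotProduct_smul] at this
    have hvv : dotProduct v v = S := by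
      simp [dotProduct, hS, sq]
    have hvw : dotProduct v w = ∑ i, v i * w i := rfl
    rw [hvw, hvv, smul_eq_mul] at this
    linarith
  -- entrywise bound on G gives bound on ‖Gv‖²
  have h2 : ∑ i, w i ^ 2 ≤ (n : ℝ) ^ 2 * L ^ 2 * S := by
    have hper : ∀ i, w i ^ 2 ≤ L ^ 2 * (n : ℝ) * S := by
      intro i
      have h1' : |w i| ≤ L * ∑ j, |v j| := by
        calc |w i| = |∑ j, G i j * v j| := rfl
          _ ≤ ∑ j, |G i j * v j| := Finset.abs_sum_le_sum_abs _ _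
          _ ≤ ∑ j, L * |v j| := by
              refine Finset.sum_le_sum fun j _ => ?_
              rw [abs_mul]
              exact mul_le_mul_of_nonneg_right (hG i j) (abs_nonneg _)
          _ = L * ∑ j, |v j| := (Finset.mul_sum _ _ _).symm
      have hsq : w i ^ 2 ≤ (L * ∑ j, |v j|) ^ 2 := by
        rw [← sq_abs (w i)]
        exact pow_le_pow_left₀ (abs_nonneg _) h1' 2
      have hcs : (∑ j, |v j|) ^ 2 ≤ (n : ℝ) * ∑ j, |v j| ^ 2 := by
        have := sq_sum_le_card_mul_sum_sq (s := (Finset.univ : Finset (Fin n)))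
          (f := fun j => |v j|)
        simpa using this
      have hvabs : ∑ j, |v j| ^ 2 = S := by
        simp [hS, sq_abs]
      calc w i ^ 2 ≤ (L * ∑ j, |v j|) ^ 2 := hsq
        _ = L ^ 2 * (∑ j, |v j|) ^ 2 := by ring
        _ ≤ L ^ 2 * ((n : ℝ) * S) := by
            rw [← hvabs] at *
            exact mul_le_mul_of_nonneg_left hcs (sq_nonneg L)
        _ = L ^ 2 * (n : ℝ) * S := by ring
    calc ∑ i, w i ^ 2 ≤ ∑ _i : Fin n, L ^ 2 * (n : ℝ) * S :=
          Finset.sum_le_sum fun i _ => hper i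
      _ = (n : ℝ) * (L ^ 2 * (n : ℝ) * S) := by
          rw [Finset.sum_const, Finset.card_univ, Fintype.card_fin, nsmul_eq_mul]
      _ = (n : ℝ) ^ 2 * L ^ 2 * S := by ring
  -- squared bound for the G part
  have hsum : ∑ i, (v i + γ * w i) ^ 2 ≤ c * S := by
    have hexp : ∑ i, (v i + γ * w i) ^ 2
        = S + 2 * γ * (∑ i, v i * w i) + γ ^ 2 * ∑ i, w i ^ 2 := by
      rw [hS, Finset.mul_sum, Finset.mul_sum, ← Finset.sum_add_distrib,
        ← Finset.sum_add_distrib]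
      exact Finset.sum_congr rfl fun i _ => by ring
    rw [hexp, hc]
    nlinarith [sq_nonneg γ, h1, h2]
  have hGpart : enorm' (v + γ • w) ≤ Real.sqrt c * enorm' v := by
    have heq : enorm' (v + γ • w) = Real.sqrt (∑ i, (v i + γ * w i) ^ 2) := rfl
    rw [heq]
    calc Real.sqrt (∑ i, (v i + γ * w i) ^ 2) ≤ Real.sqrt (c * S) := Real.sqrt_le_sqrt hsum
      _ = Real.sqrt c * enorm' v := by rw [Real.sqrt_mul hnn]; rfl
  calc enorm' (((1 : Matrix (Fin n) (Fin n) ℝ) + γ • G).mulVec v + η • H.mulVec u)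
      ≤ enorm' (((1 : Matrix (Fin n) (Fin n) ℝ) + γ • G).mulVec v)
        + enorm' (η • H.mulVec u) := enorm'_add_le _ _
    _ = enorm' (v + γ • w) + |η| * enorm' (H.mulVec u) := by rw [hmv, enorm_smul']
    _ ≤ Real.sqrt c * enorm' v + η * (P * enorm' u) := by
        have h3 : |η| * enorm' (H.mulVec u) ≤ η * (P * enorm' u) := by
          rw [abs_of_pos hη]
          exact mul_le_mul_of_nonneg_left (hH u) hη.le
        exact add_le_add hGpart h3
    _ = Real.sqrt c * enorm' v + η * P * enorm' u := by ring
end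

section
/- (Gradient descent on smooth strongly convex functions: function-value convergence.) Let f : ℝᵐ → ℝ be differentiable, M-smooth, and ν-strongly convex with 0 < ν ≤ M, and let w* be its minimizer. Define iterates x_{t+1} = x_t − (1/M)·∇f(x_t). Then for every T ≥ 0, f(x_T) − f(w*) ≤ (1 − ν/M)^T · (f(x₀) − f(w*)). Consequently, for any ε > 0, f(x_T) − f(w*) < ε whenever T > (ln((f(x₀) − f(w*))/ε))/(ln(1/(1 − ν/M))). -/
open scoped RealInnerProductSpace

/-- Gradient descent on an `M`-smooth, `ν`-strongly convex function with step `1/M`: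
function values converge linearly, `f(x_T) − f(w*) ≤ (1 − ν/M)^T (f(x₀) − f(w*))`;
consequently `f(x_T) − f(w*) < ε` once `T > ln((f(x₀)−f(w*))/ε)/ln(1/(1−ν/M))`. -/
theorem gradient_descent_value_convergence {m : ℕ}
    (f : EuclideanSpace ℝ (Fin m) → ℝ) (M ν : ℝ) (hν : 0 < ν) (hνM : ν ≤ M)
    (hdiff : Differentiable ℝ f)
    (hsmooth : ∀ x x' : EuclideanSpace ℝ (Fin m),
      f x' ≤ f x + ⟪gradient f x, x' - x⟫ + M / 2 * ‖x - x'‖ ^ 2)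
    (hconv : ∀ x x' : EuclideanSpace ℝ (Fin m),
      f x + ⟪gradient f x, x' - x⟫ + ν / 2 * ‖x - x'‖ ^ 2 ≤ f x')
    (wstar : EuclideanSpace ℝ (Fin m)) (hmin : ∀ x, f wstar ≤ f x)
    (x : ℕ → EuclideanSpace ℝ (Fin m))
    (hupd : ∀ t, x (t + 1) = x t - (1 / M) • gradient f (x t)) :
    (∀ T : ℕ, f (x T) - f wstar ≤ (1 - ν / M) ^ T * (f (x 0) - f wstar)) ∧
    (∀ ε : ℝ, 0 < ε → ∀ T : ℕ,
      Real.log ((f (x 0) - f wstar) / ε) / Real.log (1 / (1 - ν / M)) < (T : ℝ) →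
      f (x T) - f wstar < ε) := by
  have hM : 0 < M := lt_of_lt_of_le hν hνM
  have hq0 : 0 ≤ 1 - ν / M := by
    have : ν / M ≤ 1 := (div_le_one hM).mpr hνM
    linarith
  have hq1 : 1 - ν / M < 1 := by
    have : 0 < ν / M := div_pos hν hM
    linarith
  -- PL inequality
  have hPL : ∀ t : ℕ, 2 * ν * (f (x t) - f wstar) ≤ ‖gradient f (x t)‖ ^ 2 := by
    intro t
    have h := hconv (x t) wstar
    have hip : -(‖gradient f (x t)‖ * ‖wstar - x t‖) ≤ ⟪gradient f (x t), wstar - x t⟫ := by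
      have h1 := abs_real_inner_le_norm (gradient f (x t)) (wstar - x t)
      have h2 := neg_abs_le ⟪gradient f (x t), wstar - x t⟫
      linarith
    have hn : ‖x t - wstar‖ = ‖wstar - x t‖ := norm_sub_rev _ _
    rw [hn] at h
    nlinarith [sq_nonneg (ν * ‖wstar - x t‖ - ‖gradient f (x t)‖),
      norm_nonneg (wstar - x t), norm_nonneg (gradient f (x t))]
  -- one step descent
  have hstep : ∀ t : ℕ, f (x (t + 1)) - f wstar ≤ (1 - ν / M) * (f (x t) - f wstar) := by
    intro t
    have h := hsmooth (x t) (x (t + 1))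
    have e1 : x (t + 1) - x t = -((1 / M) • gradient f (x t)) := by
      rw [hupd t, sub_sub_cancel_left]
    have e2 : x t - x (t + 1) = (1 / M) • gradient f (x t) := by
      rw [hupd t, sub_sub_cancel]
    rw [e1, e2] at h
    rw [inner_neg_right, real_inner_smul_right, real_inner_self_eq_norm_sq] at h
    rw [norm_smul, Real.norm_eq_abs, mul_pow, sq_abs] at h
    have h2 : f (x (t + 1)) ≤ f (x t) - ‖gradient f (x t)‖ ^ 2 / (2 * M) := by
      have e : -(1 / M * ‖gradient f (x t)‖ ^ 2) +
          M / 2 * ((1 / M) ^ 2 * ‖gradient f (x t)‖ ^ 2)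
          = -(‖gradient f (x t)‖ ^ 2 / (2 * M)) := by
        field_simp; ring
      linarith [h, e]
    have h3 : ν / M * (f (x t) - f wstar) ≤ ‖gradient f (x t)‖ ^ 2 / (2 * M) := by
      rw [div_mul_eq_mul_div, div_le_div_iff₀ hM (by positivity)]
      nlinarith [hPL t]
    linarith
  have hmain : ∀ T : ℕ, f (x T) - f wstar ≤ (1 - ν / M) ^ T * (f (x 0) - f wstar) := by
    intro T
    induction T with
    | zero => simp
    | succ t ih =>
      calc f (x (t + 1)) - f wstar ≤ (1 - ν / M) * (f (x t) - f wstar) := hstep t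
        _ ≤ (1 - ν / M) * ((1 - ν / M) ^ t * (f (x 0) - f wstar)) := by
            exact mul_le_mul_of_nonneg_left ih hq0
        _ = (1 - ν / M) ^ (t + 1) * (f (x 0) - f wstar) := by ring
  refine ⟨hmain, ?_⟩
  intro ε hε T hT
  have hD : 0 ≤ f (x 0) - f wstar := sub_nonneg.mpr (hmin _)
  rcases eq_or_lt_of_le hq0 with hq | hq
  · -- q = 0
    have hTpos : 0 < T := by
      rw [← hq] at hT
      simp at hT
      exact_mod_cast hT
    have : (1 - ν / M) ^ T = 0 := by
      rw [← hq]; exact zero_pow hTpos.ne'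
    have h := hmain T
    rw [this, zero_mul] at h
    linarith
  · rcases eq_or_lt_of_le hD with hD0 | hD0
    · have := hmain T
      rw [← hD0] at this
      simp at this
      linarith
    · -- 0 < q < 1, 0 < D
      have hlogq : Real.log (1 - ν / M) < 0 := Real.log_neg hq hq1
      have hloginv : Real.log (1 / (1 - ν / M)) = -Real.log (1 - ν / M) := by
        rw [one_div, Real.log_inv]
      have hlogpos : 0 < Real.log (1 / (1 - ν / M)) := by rw [hloginv]; linarith
      rw [div_lt_iff₀ hlogpos] at hT
      rw [hloginv, Real.log_div hD0.ne' hε.ne'] at hT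
      have key : Real.log ((1 - ν / M) ^ T * (f (x 0) - f wstar)) < Real.log ε := by
        rw [Real.log_mul (by positivity) hD0.ne', Real.log_pow]
        push_cast
        nlinarith
      have hlt : (1 - ν / M) ^ T * (f (x 0) - f wstar) < ε := by
        have h1 := Real.exp_log (show (0:ℝ) < (1 - ν / M) ^ T * (f (x 0) - f wstar) by positivity)
        have h2 := Real.exp_log hε
        rw [← h1, ← h2]
        exact Real.exp_lt_exp.mpr key
      linarith [hmain T]
end

section
/- (Gradient descent on smooth strongly convex functions: iterate convergence.) Let f : ℝᵐ → ℝ be differentiable, M-smooth, and ν-strongly convex with 0 < ν ≤ M, and let w* be its minimizer. Define iterates x_{t+1} = x_t − (2/(M+ν))·∇f(x_t). Then for every T ≥ 0, ‖x_T − w*‖₂ ≤ ((M − ν)/(M + ν))^T · ‖x₀ − w*‖₂. Consequently, for any ε > 0, ‖x_T − w*‖₂ < ε whenever T > (ln(‖x₀ − w*‖₂/ε))/(ln((1 + ν/M)/(1 − ν/M))). -/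
set_option maxHeartbeats 1000000

open scoped RealInnerProductSpace

private lemma gd_grad_zero {m : ℕ} (f : EuclideanSpace ℝ (Fin m) → ℝ) (M : ℝ) (hM : 0 < M)
    (hsmooth : ∀ x x' : EuclideanSpace ℝ (Fin m),
      f x' ≤ f x + ⟪gradient f x, x' - x⟫ + M / 2 * ‖x - x'‖ ^ 2)
    (wstar : EuclideanSpace ℝ (Fin m)) (hmin : ∀ x, f wstar ≤ f x) :
    gradient f wstar = 0 := by
  set g := gradient f wstar with hg
  have h := hsmooth wstar (wstar - (1/M) • g)
  have h2 := hmin (wstar - (1/M) • g)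
  have ea : wstar - (1/M) • g - wstar = -((1/M) • g) := by abel
  have eb : wstar - (wstar - (1/M) • g) = (1/M) • g := by abel
  rw [← hg, ea, eb, inner_neg_right, real_inner_smul_right, real_inner_self_eq_norm_sq,
    norm_smul] at h
  simp only [Real.norm_eq_abs, abs_of_pos (by positivity : (0:ℝ) < 1/M)] at h
  have h3 : (0:ℝ) ≤ -((1/M) * ‖g‖^2) + M/2 * ((1/M) * ‖g‖)^2 := by linarith
  have h4 : -((1/M) * ‖g‖^2) + M/2 * ((1/M) * ‖g‖)^2 = -(‖g‖^2/(2*M)) := by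
    field_simp; ring
  rw [h4] at h3
  have h5 : ‖g‖^2 ≤ 0 := by
    by_contra hc; push_neg at hc
    have : 0 < ‖g‖^2/(2*M) := div_pos hc (by linarith)
    linarith
  have h6 : ‖g‖ = 0 := by nlinarith [norm_nonneg g]
  exact norm_eq_zero.mp h6

private lemma gd_key {m : ℕ} (f : EuclideanSpace ℝ (Fin m) → ℝ) (M ν : ℝ)
    (hν : 0 < ν) (hνM : ν ≤ M)
    (hsmooth : ∀ x x' : EuclideanSpace ℝ (Fin m),
      f x' ≤ f x + ⟪gradient f x, x' - x⟫ + M / 2 * ‖x - x'‖ ^ 2)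
    (hconv : ∀ x x' : EuclideanSpace ℝ (Fin m),
      f x + ⟪gradient f x, x' - x⟫ + ν / 2 * ‖x - x'‖ ^ 2 ≤ f x')
    (wstar : EuclideanSpace ℝ (Fin m)) (hg0 : gradient f wstar = 0)
    (p : EuclideanSpace ℝ (Fin m)) :
    ‖p - (2 / (M + ν)) • gradient f p - wstar‖ ≤ (M - ν) / (M + ν) * ‖p - wstar‖ := by
  have hM : 0 < M := lt_of_lt_of_le hν hνM
  have hs : 0 < M + ν := by linarith
  set g := gradient f p with hgdef
  have hUexp : ‖g - ν • (p - wstar)‖^2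
      = ‖g‖^2 - 2*ν*⟪g, p - wstar⟫ + ν^2*‖p - wstar‖^2 := by
    simp only [← real_inner_self_eq_norm_sq]
    simp only [inner_sub_left, inner_sub_right, inner_add_left, inner_add_right,
      real_inner_smul_left, real_inner_smul_right, real_inner_comm]
    ring
  have Sgen : ∀ c : ℝ, ν*‖p - wstar‖^2 - ⟪g, p - wstar⟫ + 2*c*‖g - ν • (p - wstar)‖^2
      + (ν - M)*c^2*‖g - ν • (p - wstar)‖^2 ≤ 0 := by
    intro c
    have I1 := hconv p (wstar + c • (g - ν • (p - wstar)))
    have I2 := hsmooth wstar (wstar + c • (g - ν • (p - wstar)))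
    have I3 := hconv wstar (p - c • (g - ν • (p - wstar)))
    have I4 := hsmooth p (p - c • (g - ν • (p - wstar)))
    rw [hg0] at I2 I3
    rw [← hgdef] at I1 I4
    simp only [inner_zero_left, add_zero, zero_add] at I2 I3
    simp only [← real_inner_self_eq_norm_sq] at I1 I2 I3 I4 ⊢
    simp only [inner_sub_left, inner_sub_right, inner_add_left, inner_add_right,
      real_inner_smul_left, real_inner_smul_right, real_inner_comm] at I1 I2 I3 I4 ⊢
    linarith
  have key1 : ‖g‖^2 + M*ν*‖p - wstar‖^2 ≤ (M + ν) * ⟪g, p - wstar⟫ := by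
    rcases eq_or_lt_of_le hνM with hMν | hMν
    · -- ν = M
      subst hMν
      have I5 := hsmooth p wstar
      have I6 := hsmooth wstar p
      rw [hg0] at I6
      rw [← hgdef] at I5
      simp only [inner_zero_left, add_zero, zero_add] at I6
      have hA : ⟪g, p - wstar⟫ ≤ ν*‖p - wstar‖^2 := by
        have e1 : ⟪g, wstar - p⟫ = -⟪g, p - wstar⟫ := by
          rw [← inner_neg_right]; congr 1; abel
        have e2 : ‖wstar - p‖^2 = ‖p - wstar‖^2 := by
          rw [show wstar - p = -(p - wstar) by abel, norm_neg]
        rw [e1] at I5; rw [e2] at I6; linarith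
      have S := Sgen 1
      have hU2 : ‖g - ν • (p - wstar)‖^2 ≤ 0 := by nlinarith
      nlinarith [hUexp, hU2]
    · -- ν < M
      have hL : 0 < M - ν := by linarith
      set c : ℝ := (M - ν)⁻¹ with hcdef
      have hd : (M - ν) * c = 1 := mul_inv_cancel₀ (ne_of_gt hL)
      have S := Sgen c
      have e1 : 2*c*‖g - ν • (p - wstar)‖^2 + (ν - M)*c^2*‖g - ν • (p - wstar)‖^2
          = c*‖g - ν • (p - wstar)‖^2 := by
        linear_combination (-(c*‖g - ν • (p - wstar)‖^2)) * hd
      rw [show ν*‖p - wstar‖^2 - ⟪g, p - wstar⟫ + 2*c*‖g - ν • (p - wstar)‖^2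
          + (ν - M)*c^2*‖g - ν • (p - wstar)‖^2
          = ν*‖p - wstar‖^2 - ⟪g, p - wstar⟫ + (2*c*‖g - ν • (p - wstar)‖^2
          + (ν - M)*c^2*‖g - ν • (p - wstar)‖^2) by ring, e1] at S
      have S2 := mul_le_mul_of_nonneg_left S (le_of_lt hL)
      rw [mul_zero] at S2
      have hMcU : (M - ν) * (c*‖g - ν • (p - wstar)‖^2) = ‖g - ν • (p - wstar)‖^2 := by
        linear_combination (‖g - ν • (p - wstar)‖^2) * hd
      nlinarith [hUexp, S2, hMcU]
  have hexp : ‖p - (2/(M+ν)) • g - wstar‖^2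
      = ‖p - wstar‖^2 - (4/(M+ν))*⟪g, p - wstar⟫ + (2/(M+ν))^2*‖g‖^2 := by
    simp only [← real_inner_self_eq_norm_sq]
    simp only [inner_sub_left, inner_sub_right, inner_add_left, inner_add_right,
      real_inner_smul_left, real_inner_smul_right, real_inner_comm]
    ring
  have hs2 : (0:ℝ) < (M+ν)^2 := by positivity
  have h2 : ‖p - (2/(M+ν)) • g - wstar‖^2 ≤ ((M-ν)/(M+ν)*‖p - wstar‖)^2 := by
    rw [hexp, ← mul_le_mul_iff_right₀ hs2]
    have eL : (M+ν)^2 * (‖p - wstar‖^2 - (4/(M+ν))*⟪g, p - wstar⟫ + (2/(M+ν))^2*‖g‖^2)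
        = (M+ν)^2*‖p - wstar‖^2 - 4*(M+ν)*⟪g, p - wstar⟫ + 4*‖g‖^2 := by
      field_simp; ring
    have eR : (M+ν)^2 * (((M-ν)/(M+ν)*‖p - wstar‖)^2) = (M-ν)^2*‖p - wstar‖^2 := by
      field_simp
    rw [eL, eR]
    nlinarith [key1]
  have hρ : 0 ≤ (M-ν)/(M+ν) * ‖p - wstar‖ :=
    mul_nonneg (div_nonneg (by linarith) (le_of_lt hs)) (norm_nonneg _)
  have h3 := Real.sqrt_le_sqrt h2
  rwa [Real.sqrt_sq (norm_nonneg _), Real.sqrt_sq hρ] at h3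

/-- Gradient descent on an `M`-smooth, `ν`-strongly convex function with step `2/(M+ν)`:
iterates converge linearly, `‖x_T − w*‖ ≤ ((M−ν)/(M+ν))^T ‖x₀ − w*‖`; consequently
`‖x_T − w*‖ < ε` once `T > ln(‖x₀ − w*‖/ε)/ln((1+ν/M)/(1−ν/M))`. -/
theorem gradient_descent_iterate_convergence {m : ℕ}
    (f : EuclideanSpace ℝ (Fin m) → ℝ) (M ν : ℝ) (hν : 0 < ν) (hνM : ν ≤ M)
    (hdiff : Differentiable ℝ f)
    (hsmooth : ∀ x x' : EuclideanSpace ℝ (Fin m),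
      f x' ≤ f x + ⟪gradient f x, x' - x⟫ + M / 2 * ‖x - x'‖ ^ 2)
    (hconv : ∀ x x' : EuclideanSpace ℝ (Fin m),
      f x + ⟪gradient f x, x' - x⟫ + ν / 2 * ‖x - x'‖ ^ 2 ≤ f x')
    (wstar : EuclideanSpace ℝ (Fin m)) (hmin : ∀ x, f wstar ≤ f x)
    (x : ℕ → EuclideanSpace ℝ (Fin m))
    (hupd : ∀ t, x (t + 1) = x t - (2 / (M + ν)) • gradient f (x t)) :
    (∀ T : ℕ, ‖x T - wstar‖ ≤ ((M - ν) / (M + ν)) ^ T * ‖x 0 - wstar‖) ∧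
    (∀ ε : ℝ, 0 < ε → ∀ T : ℕ,
      Real.log (‖x 0 - wstar‖ / ε) / Real.log ((1 + ν / M) / (1 - ν / M)) < (T : ℝ) →
      ‖x T - wstar‖ < ε) := by
  have hM : 0 < M := lt_of_lt_of_le hν hνM
  have hs : 0 < M + ν := by linarith
  have hg0 : gradient f wstar = 0 := gd_grad_zero f M hM hsmooth wstar hmin
  have key : ∀ t, ‖x (t+1) - wstar‖ ≤ (M - ν) / (M + ν) * ‖x t - wstar‖ := by
    intro t
    rw [hupd t]
    exact gd_key f M ν hν hνM hsmooth hconv wstar hg0 (x t)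
  set ρ : ℝ := (M - ν) / (M + ν) with hρdef
  have hρ0 : 0 ≤ ρ := div_nonneg (by linarith) (le_of_lt hs)
  have hρ1 : ρ < 1 := by
    rw [hρdef, div_lt_one hs]; linarith
  have part1 : ∀ T : ℕ, ‖x T - wstar‖ ≤ ρ ^ T * ‖x 0 - wstar‖ := by
    intro T
    induction T with
    | zero => simp
    | succ n ih =>
      calc ‖x (n+1) - wstar‖ ≤ ρ * ‖x n - wstar‖ := key n
        _ ≤ ρ * (ρ ^ n * ‖x 0 - wstar‖) := mul_le_mul_of_nonneg_left ih hρ0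
        _ = ρ ^ (n+1) * ‖x 0 - wstar‖ := by ring
  refine ⟨part1, ?_⟩
  intro ε hε T hT
  have hR0 : 0 ≤ ‖x 0 - wstar‖ := norm_nonneg _
  rcases eq_or_lt_of_le hνM with hMν | hMν
  · -- ν = M : ρ = 0 and the log condition forces T ≥ 1
    have hρz : ρ = 0 := by
      rw [hρdef, show M - ν = 0 by linarith, zero_div]
    have h1 : ν / M = 1 := by rw [hMν]; exact div_self (ne_of_gt hM)
    have h2 : (1 + ν / M) / (1 - ν / M) = 0 := by rw [h1]; norm_num
    rw [h2, Real.log_zero, div_zero] at hT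
    have hT1 : 0 < T := by exact_mod_cast hT
    have h3 : ρ ^ T = 0 := by rw [hρz]; exact zero_pow (by omega : T ≠ 0)
    calc ‖x T - wstar‖ ≤ ρ ^ T * ‖x 0 - wstar‖ := part1 T
      _ = 0 := by rw [h3, zero_mul]
      _ < ε := hε
  · -- ν < M
    have hρpos : 0 < ρ := div_pos (by linarith) hs
    have hr : (1 + ν / M) / (1 - ν / M) = ρ⁻¹ := by
      rw [hρdef, inv_div]
      field_simp
    rw [hr, Real.log_inv] at hT
    have hlogρ : Real.log ρ < 0 := Real.log_neg hρpos hρ1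
    have hlogr : 0 < -Real.log ρ := by linarith
    rw [div_lt_iff₀ hlogr] at hT
    rcases eq_or_lt_of_le hR0 with hR | hR
    · calc ‖x T - wstar‖ ≤ ρ ^ T * ‖x 0 - wstar‖ := part1 T
        _ = 0 := by rw [← hR]; ring
        _ < ε := hε
    · have hlt : Real.log (ρ ^ T * ‖x 0 - wstar‖) < Real.log ε := by
        rw [Real.log_mul (by positivity) (ne_of_gt hR), Real.log_pow]
        rw [Real.log_div (ne_of_gt hR) (ne_of_gt hε)] at hT
        nlinarith
      have h4 : ρ ^ T * ‖x 0 - wstar‖ < ε :=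
        (Real.log_lt_log_iff (by positivity) hε).mp hlt
      exact lt_of_le_of_lt (part1 T) h4
end

section
/- (One-step norm recursion for the coupled UPBReD gradients.) Suppose u_i and a_i are twice continuously differentiable, and for all (w,s) the matrices satisfy: G(w,s)+λI negative semidefinite, G̃(w,s)+λ̃I negative semidefinite, |G(w,s)_{ij}| ≤ L, |G̃(w,s)_{kℓ}| ≤ L̃, ‖H(w,s)‖_op ≤ P, ‖H̃(w,s)‖_op ≤ P̃. Assume in addition the first-order mean-value expansions g(w^{t+1},s^{t+1},μ^{t+1}) = g(w^t,s^t,μ^t) + G(w^t,s',μ^t)(s^{t+1}−s^t) + H(w',s^t,μ^t)(w^{t+1}−w^t) and g̃(w^{t+1},s^{t+1}) = g̃(w^t,s^t) + G̃(w',s^t)(w^{t+1}−w^t) + H̃(w^t,s')(s^{t+1}−s^t) hold for some intermediate points s', w' on the segments between the iterates, where the updates are s^{t+1} = s^t + γ·g(w^t,s^t,μ^t) and w^{t+1} = w^t + η·g̃(w^t,s^t), and 1+γ²n²L²−2γλ ≥ 0, 1+η²m²L̃²−2ηλ̃ ≥ 0. Then ‖g(w^{t+1},s^{t+1},μ^{t+1})‖₂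 ≤ √(1+γ²n²L²−2γλ)·‖g(w^t,s^t,μ^t)‖₂ + ηP·‖g̃(w^t,s^t)‖₂, and ‖g̃(w^{t+1},s^{t+1})‖₂ ≤ √(1+η²m²L̃²−2ηλ̃)·‖g̃(w^t,s^t)‖₂ + γP̃·‖g(w^t,s^t,μ^t)‖₂. -/
noncomputable section

/-- The Euclidean norm of a vector in `ℝⁿ`. -/
def eucNorm {n : ℕ} (v : Fin n → ℝ) : ℝ :=
  Real.sqrt (∑ i, (v i) ^ 2)

/-- The partial derivative of `F(w,s)` with respect to the coordinate `s_j`. -/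
def pderivS {n m : ℕ} (F : (Fin m → ℝ) → (Fin n → ℝ) → ℝ)
    (j : Fin n) (w : Fin m → ℝ) (s : Fin n → ℝ) : ℝ :=
  deriv (fun x : ℝ => F w (Function.update s j x)) (s j)

/-- The partial derivative of `F(w,s)` with respect to the coordinate `w_k`. -/
def pderivW {n m : ℕ} (F : (Fin m → ℝ) → (Fin n → ℝ) → ℝ)
    (k : Fin m) (w : Fin m → ℝ) (s : Fin n → ℝ) : ℝ :=
  deriv (fun x : ℝ => F (Function.update w k x) s) (w k)

/-- The clamped strategy gradient `g(w,s,μ)`. -/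
def gvec {n m : ℕ} (u : Fin n → (Fin m → ℝ) → (Fin n → ℝ) → ℝ) (smax : Fin n → ℝ)
    (w : Fin m → ℝ) (s : Fin n → ℝ) : Fin n → ℝ :=
  fun i =>
    if (s i = 0 ∧ pderivS (u i) i w s < 0) ∨ (s i = smax i ∧ 0 < pderivS (u i) i w s)
    then 0 else pderivS (u i) i w s

/-- The center's gradient `g̃(w,s) = (1/n) ∑_i ∇_w a_i(w,s)`. -/
def gtil {n m : ℕ} (a : Fin n → (Fin m → ℝ) → (Fin n → ℝ) → ℝ)
    (w : Fin m → ℝ) (s : Fin n → ℝ) : Fin m → ℝ :=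
  fun k => (1 / (n : ℝ)) * ∑ i, pderivW (a i) k w s

/-- The matrix `G(w,s)_{ij} = ∂²u_i/∂s_j∂s_i`. -/
def Gmat {n m : ℕ} (u : Fin n → (Fin m → ℝ) → (Fin n → ℝ) → ℝ)
    (w : Fin m → ℝ) (s : Fin n → ℝ) : Matrix (Fin n) (Fin n) ℝ :=
  fun i j => pderivS (fun w' s' => pderivS (u i) i w' s') j w s

/-- The matrix `G̃(w,s)_{kℓ} = (1/n) ∑_i ∂²a_i/∂w_ℓ∂w_k`. -/
def Gtilmat {n m : ℕ} (a : Fin n → (Fin m → ℝ) → (Fin n → ℝ) → ℝ)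
    (w : Fin m → ℝ) (s : Fin n → ℝ) : Matrix (Fin m) (Fin m) ℝ :=
  fun k l => (1 / (n : ℝ)) * ∑ i, pderivW (fun w' s' => pderivW (a i) k w' s') l w s

/-- The matrix `H(w,s)_{ik} = ∂²u_i/∂w_k∂s_i`. -/
def Hmat {n m : ℕ} (u : Fin n → (Fin m → ℝ) → (Fin n → ℝ) → ℝ)
    (w : Fin m → ℝ) (s : Fin n → ℝ) : Matrix (Fin n) (Fin m) ℝ :=
  fun i k => pderivW (fun w' s' => pderivS (u i) i w' s') k w s

/-- The matrix `H̃(w,s)_{kj} = ∑_i ∂²a_i/∂s_j∂w_k`. -/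
def Htilmat {n m : ℕ} (a : Fin n → (Fin m → ℝ) → (Fin n → ℝ) → ℝ)
    (w : Fin m → ℝ) (s : Fin n → ℝ) : Matrix (Fin m) (Fin n) ℝ :=
  fun k j => ∑ i, pderivS (fun w' s' => pderivW (a i) k w' s') j w s

lemma eucNorm_eq_norm {k : ℕ} (v : Fin k → ℝ) :
    eucNorm v = ‖(WithLp.equiv 2 (Fin k → ℝ)).symm v‖ := by
  rw [EuclideanSpace.norm_eq]
  simp [eucNorm, Real.norm_eq_abs, sq_abs]

lemma enorm_nonneg'_s16 {k : ℕ} (v : Fin k → ℝ) : 0 ≤ eucNorm v := Real.sqrt_nonneg _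

lemma eucNorm_add_le {k : ℕ} (v w : Fin k → ℝ) : eucNorm (v + w) ≤ eucNorm v + eucNorm w := by
  rw [eucNorm_eq_norm, eucNorm_eq_norm, eucNorm_eq_norm]
  exact norm_add_le _ _

lemma eucNorm_smul {k : ℕ} (c : ℝ) (v : Fin k → ℝ) : eucNorm (c • v) = |c| * eucNorm v := by
  rw [eucNorm_eq_norm, eucNorm_eq_norm]
  have : (WithLp.equiv 2 (Fin k → ℝ)).symm (c • v)
      = c • (WithLp.equiv 2 (Fin k → ℝ)).symm v := rfl
  rw [this, norm_smul, Real.norm_eq_abs]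

lemma key_quad {k : ℕ} (A : Matrix (Fin k) (Fin k) ℝ) (lam L γ : ℝ)
    (hnsd : ∀ v, dotProduct v ((A + lam • (1 : Matrix (Fin k) (Fin k) ℝ)).mulVec v) ≤ 0)
    (hb : ∀ i j, |A i j| ≤ L) (hγ : 0 ≤ γ)
    (h1 : 0 ≤ 1 + γ ^ 2 * (k : ℝ) ^ 2 * L ^ 2 - 2 * γ * lam) (g : Fin k → ℝ) :
    eucNorm (g + γ • A.mulVec g)
      ≤ Real.sqrt (1 + γ ^ 2 * (k : ℝ) ^ 2 * L ^ 2 - 2 * γ * lam) * eucNorm g := by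
  set T : ℝ := ∑ j, (g j) ^ 2 with hT
  have hTnn : 0 ≤ T := Finset.sum_nonneg fun _ _ => sq_nonneg _
  -- bound on the quadratic form
  have hquad : dotProduct g (A.mulVec g) ≤ -lam * T := by
    have := hnsd g
    have hexp : dotProduct g ((A + lam • (1 : Matrix (Fin k) (Fin k) ℝ)).mulVec g)
        = dotProduct g (A.mulVec g) + lam * T := by
      rw [Matrix.add_mulVec, dotProduct_add, Matrix.smul_mulVec,
        Matrix.one_mulVec]
      rw [dotProduct_smul, smul_eq_mul]
      congr 1
      simp [dotProduct, hT, pow_two]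
    rw [hexp] at this
    linarith
  -- bound on ‖A g‖²
  have hAg : ∑ i, (A.mulVec g i) ^ 2 ≤ (k : ℝ) ^ 2 * L ^ 2 * T := by
    have hstep : ∀ i : Fin k, (A.mulVec g i) ^ 2 ≤ L ^ 2 * ((k : ℝ) * T) := by
      intro i
      have habs : |A.mulVec g i| ≤ L * ∑ j, |g j| := by
        calc |A.mulVec g i| = |∑ j, A i j * g j| := rfl
          _ ≤ ∑ j, |A i j * g j| := Finset.abs_sum_le_sum_abs _ _
          _ ≤ ∑ j, L * |g j| := by
              refine Finset.sum_le_sum fun j _ => ?_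
              rw [abs_mul]
              exact mul_le_mul_of_nonneg_right (hb i j) (abs_nonneg _)
          _ = L * ∑ j, |g j| := by rw [Finset.mul_sum]
      have h1 : (A.mulVec g i) ^ 2 ≤ (L * ∑ j, |g j|) ^ 2 := by
        rw [← sq_abs]
        exact pow_le_pow_left₀ (abs_nonneg _) habs 2
      have h2 : (∑ j, |g j|) ^ 2 ≤ (k : ℝ) * T := by
        have := sq_sum_le_card_mul_sum_sq (s := Finset.univ) (f := fun j : Fin k => |g j|)
        simpa [hT, sq_abs] using this
      calc (A.mulVec g i) ^ 2 ≤ (L * ∑ j, |g j|) ^ 2 := h1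
        _ = L ^ 2 * (∑ j, |g j|) ^ 2 := by ring
        _ ≤ L ^ 2 * ((k : ℝ) * T) := by
            refine mul_le_mul_of_nonneg_left h2 (sq_nonneg _)
    calc ∑ i, (A.mulVec g i) ^ 2 ≤ ∑ _i : Fin k, L ^ 2 * ((k : ℝ) * T) :=
          Finset.sum_le_sum fun i _ => hstep i
      _ = (k : ℝ) * (L ^ 2 * ((k : ℝ) * T)) := by simp [Finset.sum_const, mul_comm]
      _ = (k : ℝ) ^ 2 * L ^ 2 * T := by ring
  -- expand the squared norm
  have hS : ∑ i, (g i + γ * A.mulVec g i) ^ 2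
      = T + 2 * γ * dotProduct g (A.mulVec g) + γ ^ 2 * ∑ i, (A.mulVec g i) ^ 2 := by
    simp only [dotProduct, hT, Finset.mul_sum, ← Finset.sum_add_distrib]
    congr 1; ext i; ring
  have hSle : ∑ i, (g i + γ * A.mulVec g i) ^ 2
      ≤ (1 + γ ^ 2 * (k : ℝ) ^ 2 * L ^ 2 - 2 * γ * lam) * T := by
    rw [hS]
    nlinarith [sq_nonneg γ, mul_le_mul_of_nonneg_left hAg (sq_nonneg γ)]
  have : eucNorm (g + γ • A.mulVec g) = Real.sqrt (∑ i, (g i + γ * A.mulVec g i) ^ 2) := by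
    simp [eucNorm, Pi.add_apply, Pi.smul_apply, smul_eq_mul]
  rw [this, eucNorm]
  calc Real.sqrt (∑ i, (g i + γ * A.mulVec g i) ^ 2)
      ≤ Real.sqrt ((1 + γ ^ 2 * (k : ℝ) ^ 2 * L ^ 2 - 2 * γ * lam) * T) :=
        Real.sqrt_le_sqrt hSle
    _ = Real.sqrt (1 + γ ^ 2 * (k : ℝ) ^ 2 * L ^ 2 - 2 * γ * lam) * Real.sqrt T :=
        Real.sqrt_mul h1 _

/-- **One-step norm recursion for the coupled UPBReD gradients.**  Assuming the stated
negative semidefiniteness and boundedness of the matrix fields everywhere, and the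
first-order mean-value expansions of `g` and `g̃` along one UPBReD step (with
intermediate points `s'`, `w'` on the segments between the iterates), the gradient
norms satisfy the coupled one-step recursion. -/
theorem upbred_one_step_norm_recursion {n m : ℕ}
    (u a : Fin n → (Fin m → ℝ) → (Fin n → ℝ) → ℝ) (smax : Fin n → ℝ)
    (hu : ∀ i, ContDiff ℝ 2 (fun p : (Fin m → ℝ) × (Fin n → ℝ) => u i p.1 p.2))
    (ha : ∀ i, ContDiff ℝ 2 (fun p : (Fin m → ℝ) × (Fin n → ℝ) => a i p.1 p.2))
    (lam lamt L Lt P Pt : ℝ) (hP : 0 ≤ P) (hPt : 0 ≤ Pt)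
    (hGnsd : ∀ (w : Fin m → ℝ) (s : Fin n → ℝ) (v : Fin n → ℝ),
      dotProduct v ((Gmat u w s + lam • (1 : Matrix (Fin n) (Fin n) ℝ)).mulVec v) ≤ 0)
    (hGtnsd : ∀ (w : Fin m → ℝ) (s : Fin n → ℝ) (v : Fin m → ℝ),
      dotProduct v ((Gtilmat a w s + lamt • (1 : Matrix (Fin m) (Fin m) ℝ)).mulVec v) ≤ 0)
    (hGb : ∀ (w : Fin m → ℝ) (s : Fin n → ℝ) (i : Fin n) (j : Fin n), |Gmat u w s i j| ≤ L)
    (hGtb : ∀ (w : Fin m → ℝ) (s : Fin n → ℝ) (k l : Fin m), |Gtilmat a w s k l| ≤ Lt)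
    (hHb : ∀ (w : Fin m → ℝ) (s : Fin n → ℝ) (v : Fin m → ℝ),
      eucNorm ((Hmat u w s).mulVec v) ≤ P * eucNorm v)
    (hHtb : ∀ (w : Fin m → ℝ) (s : Fin n → ℝ) (v : Fin n → ℝ),
      eucNorm ((Htilmat a w s).mulVec v) ≤ Pt * eucNorm v)
    (γ η : ℝ) (hγ : 0 < γ) (hη : 0 < η)
    (wt wt1 w' : Fin m → ℝ) (st st1 s' : Fin n → ℝ)
    (hsupd : st1 = st + γ • gvec u smax wt st)
    (hwupd : wt1 = wt + η • gtil a wt st)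
    (hs' : s' ∈ segment ℝ st st1) (hw' : w' ∈ segment ℝ wt wt1)
    (hexp1 : gvec u smax wt1 st1 = gvec u smax wt st
      + (Gmat u wt s').mulVec (st1 - st) + (Hmat u w' st).mulVec (wt1 - wt))
    (hexp2 : gtil a wt1 st1 = gtil a wt st
      + (Gtilmat a w' st).mulVec (wt1 - wt) + (Htilmat a wt s').mulVec (st1 - st))
    (h1 : 0 ≤ 1 + γ ^ 2 * (n : ℝ) ^ 2 * L ^ 2 - 2 * γ * lam)
    (h2 : 0 ≤ 1 + η ^ 2 * (m : ℝ) ^ 2 * Lt ^ 2 - 2 * η * lamt) :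
    eucNorm (gvec u smax wt1 st1)
      ≤ Real.sqrt (1 + γ ^ 2 * (n : ℝ) ^ 2 * L ^ 2 - 2 * γ * lam) * eucNorm (gvec u smax wt st)
        + η * P * eucNorm (gtil a wt st) ∧
    eucNorm (gtil a wt1 st1)
      ≤ Real.sqrt (1 + η ^ 2 * (m : ℝ) ^ 2 * Lt ^ 2 - 2 * η * lamt) * eucNorm (gtil a wt st)
        + γ * Pt * eucNorm (gvec u smax wt st) := by
  set g := gvec u smax wt st with hg
  set gt := gtil a wt st with hgt
  have hds : st1 - st = γ • g := by rw [hsupd]; abel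
  have hdw : wt1 - wt = η • gt := by rw [hwupd]; abel
  constructor
  · have hrw : gvec u smax wt1 st1
        = (g + γ • (Gmat u wt s').mulVec g) + (Hmat u w' st).mulVec (η • gt) := by
      rw [hexp1, hds, hdw, Matrix.mulVec_smul]
    calc eucNorm (gvec u smax wt1 st1)
        ≤ eucNorm (g + γ • (Gmat u wt s').mulVec g)
            + eucNorm ((Hmat u w' st).mulVec (η • gt)) := by
          rw [hrw]; exact eucNorm_add_le _ _
      _ ≤ Real.sqrt (1 + γ ^ 2 * (n : ℝ) ^ 2 * L ^ 2 - 2 * γ * lam) * eucNorm g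
            + η * P * eucNorm gt := by
          refine add_le_add ?_ ?_
          · exact key_quad _ lam L γ (fun v => hGnsd wt s' v) (fun i j => hGb wt s' i j)
              hγ.le h1 g
          · calc eucNorm ((Hmat u w' st).mulVec (η • gt)) ≤ P * eucNorm (η • gt) :=
                  hHb w' st (η • gt)
              _ = η * P * eucNorm gt := by rw [eucNorm_smul, abs_of_pos hη]; ring
  · have hrw : gtil a wt1 st1
        = (gt + η • (Gtilmat a w' st).mulVec gt) + (Htilmat a wt s').mulVec (γ • g) := by
      rw [hexp2, hds, hdw, Matrix.mulVec_smul]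
    calc eucNorm (gtil a wt1 st1)
        ≤ eucNorm (gt + η • (Gtilmat a w' st).mulVec gt)
            + eucNorm ((Htilmat a wt s').mulVec (γ • g)) := by
          rw [hrw]; exact eucNorm_add_le _ _
      _ ≤ Real.sqrt (1 + η ^ 2 * (m : ℝ) ^ 2 * Lt ^ 2 - 2 * η * lamt) * eucNorm gt
            + γ * Pt * eucNorm g := by
          refine add_le_add ?_ ?_
          · exact key_quad _ lamt Lt η (fun v => hGtnsd w' st v) (fun k l => hGtb w' st k l)
              hη.le h2 gt
          · calc eucNorm ((Htilmat a wt s').mulVec (γ • g)) ≤ Pt * eucNorm (γ • g) :=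
                  hHtb wt s' (γ • g)
              _ = γ * Pt * eucNorm g := by rw [eucNorm_smul, abs_of_pos hγ]; ring

end
end
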